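/- For a discrete memoryless channel, the n-letter directed information satisfies I(X^n → Y^n) ≤ ∑_{i=1}^n I(X_i; Y_i) ≤ n·C, where C = max_{p(x)} I(X;Y), for any joint distribution of (X^n, Y^n) consistent with the memoryless channel p(y_i|x_i) (allowing arbitrary, possibly feedback-dependent, input distributions). -/
import Mathlib


open Finset

namespace NFB

variable {Ω : Type*} [Fintype Ω]

/-- Probability that the finite random variable `X` (on finite sample space `Ω`
with weights `μ`) takes the value `a`. -/
noncomputable def pr (μ : Ω → ℝ) {α : Type*} [Fintype α] [DecidableEq α]
    (X : Ω → α) (a : α) : ℝ :=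
  ∑ ω ∈ Finset.univ.filter (fun ω => X ω = a), μ ω

/-- Conditional probability `p(X = a | Y = b)`. -/
noncomputable def condpr (μ : Ω → ℝ) {α β : Type*} [Fintype α] [DecidableEq α]
    [Fintype β] [DecidableEq β] (X : Ω → α) (Y : Ω → β) (a : α) (b : β) : ℝ :=
  pr μ (fun ω => (X ω, Y ω)) (a, b) / pr μ Y b

/-- Shannon entropy (base 2) of a finite random variable. -/
noncomputable def ent (μ : Ω → ℝ) {α : Type*} [Fintype α] [DecidableEq α]
    (X : Ω → α) : ℝ :=
  ∑ a : α, -(pr μ X a * Real.logb 2 (pr μ X a))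

/-- Shannon entropy (base 2) of a distribution given directly as a weight function. -/
noncomputable def entD {γ : Type*} [Fintype γ] (p : γ → ℝ) : ℝ :=
  ∑ c : γ, -(p c * Real.logb 2 (p c))

/-- Binary entropy function (base 2). -/
noncomputable def binent (a : ℝ) : ℝ :=
  -(a * Real.logb 2 a) - ((1 - a) * Real.logb 2 (1 - a))

/-- Conditional entropy `H(X | Y)`. -/
noncomputable def condent (μ : Ω → ℝ) {α β : Type*} [Fintype α] [DecidableEq α]
    [Fintype β] [DecidableEq β] (X : Ω → α) (Y : Ω → β) : ℝ :=
  ent μ (fun ω => (X ω, Y ω)) - ent μ Y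

/-- Mutual information `I(X; Y)`. -/
noncomputable def mi (μ : Ω → ℝ) {α β : Type*} [Fintype α] [DecidableEq α]
    [Fintype β] [DecidableEq β] (X : Ω → α) (Y : Ω → β) : ℝ :=
  ent μ X + ent μ Y - ent μ (fun ω => (X ω, Y ω))

/-- Conditional mutual information `I(X; Y | Z)`. -/
noncomputable def cmi (μ : Ω → ℝ) {α β γ : Type*} [Fintype α] [DecidableEq α]
    [Fintype β] [DecidableEq β] [Fintype γ] [DecidableEq γ]
    (X : Ω → α) (Y : Ω → β) (Z : Ω → γ) : ℝ :=
  condent μ X Z + condent μ Y Z - condent μ (fun ω => (X ω, Y ω)) Z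

/-- The length-`i` prefix of a sequence `x : Fin n → α`. -/
def pfx {α : Type*} {n : ℕ} (x : Fin n → α) (i : ℕ) (h : i ≤ n) : Fin i → α :=
  fun j => x (Fin.castLE h j)

/-- Directed information `I(Xⁿ → Yⁿ) = ∑ᵢ I(Xⁱ; Yᵢ | Yⁱ⁻¹)`. -/
noncomputable def dirinfo (μ : Ω → ℝ) {α β : Type*} [Fintype α] [DecidableEq α]
    [Fintype β] [DecidableEq β] {n : ℕ} (X : Ω → Fin n → α) (Y : Ω → Fin n → β) : ℝ :=
  ∑ i : Fin n, cmi μ (fun ω => pfx (X ω) (i.1 + 1) i.isLt)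
    (fun ω => Y ω i) (fun ω => pfx (Y ω) i.1 i.isLt.le)

/-- Conditional directed information `I(Xⁿ → Yⁿ | W) = ∑ᵢ I(Xⁱ; Yᵢ | Yⁱ⁻¹, W)`. -/
noncomputable def dirinfoCond (μ : Ω → ℝ) {α β γ : Type*} [Fintype α] [DecidableEq α]
    [Fintype β] [DecidableEq β] [Fintype γ] [DecidableEq γ]
    {n : ℕ} (X : Ω → Fin n → α) (Y : Ω → Fin n → β) (W : Ω → γ) : ℝ :=
  ∑ i : Fin n, cmi μ (fun ω => pfx (X ω) (i.1 + 1) i.isLt)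
    (fun ω => Y ω i) (fun ω => (pfx (Y ω) i.1 i.isLt.le, W ω))

/-- Causal conditional directed information
`I(Xⁿ → Yⁿ ‖ Zⁿ) = ∑ᵢ I(Xⁱ; Yᵢ | Yⁱ⁻¹, Zⁱ⁻¹)`. -/
noncomputable def dirinfoCausal (μ : Ω → ℝ) {α β γ : Type*} [Fintype α] [DecidableEq α]
    [Fintype β] [DecidableEq β] [Fintype γ] [DecidableEq γ]
    {n : ℕ} (X : Ω → Fin n → α) (Y : Ω → Fin n → β) (Z : Ω → Fin n → γ) : ℝ :=
  ∑ i : Fin n, cmi μ (fun ω => pfx (X ω) (i.1 + 1) i.isLt)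
    (fun ω => Y ω i) (fun ω => (pfx (Y ω) i.1 i.isLt.le, pfx (Z ω) i.1 i.isLt.le))

/-- Directed information from feedback to outputs
`I(Zⁿ⁻¹ → Yⁿ) = ∑ᵢ I(Zⁱ⁻¹; Yᵢ | Yⁱ⁻¹)`. -/
noncomputable def fbinfo (μ : Ω → ℝ) {ζ β : Type*} [Fintype ζ] [DecidableEq ζ]
    [Fintype β] [DecidableEq β] {n : ℕ} (Z : Ω → Fin n → ζ) (Y : Ω → Fin n → β) : ℝ :=
  ∑ i : Fin n, cmi μ (fun ω => pfx (Z ω) i.1 i.isLt.le)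
    (fun ω => Y ω i) (fun ω => pfx (Y ω) i.1 i.isLt.le)

lemma pr_nonneg (μ : Ω → ℝ) (hμ0 : ∀ ω, 0 ≤ μ ω) {α : Type*} [Fintype α] [DecidableEq α]
    (X : Ω → α) (a : α) : 0 ≤ pr μ X a :=
  Finset.sum_nonneg fun ω _ => hμ0 ω

lemma pr_sum (μ : Ω → ℝ) {α : Type*} [Fintype α] [DecidableEq α] (X : Ω → α) :
    ∑ a, pr μ X a = ∑ ω, μ ω := by
  unfold pr
  rw [Finset.sum_fiberwise_eq_sum_filter]
  simp

lemma pr_fiber (μ : Ω → ℝ) {α γ : Type*} [Fintype α] [DecidableEq α] [Fintype γ] [DecidableEq γ]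
    (Z : Ω → α) (g : α → γ) (c : γ) :
    pr μ (fun ω => g (Z ω)) c = ∑ z ∈ Finset.univ.filter (fun z => g z = c), pr μ Z z := by
  unfold pr
  rw [Finset.sum_fiberwise_eq_sum_filter]
  apply Finset.sum_congr
  · apply Finset.filter_congr; intro ω _; simp
  · intros; rfl

lemma pr_fst (μ : Ω → ℝ) {α β : Type*} [Fintype α] [DecidableEq α] [Fintype β] [DecidableEq β]
    (X : Ω → α) (Y : Ω → β) (a : α) :
    pr μ X a = ∑ b, pr μ (fun ω => (X ω, Y ω)) (a, b) := by
  have h := pr_fiber μ (fun ω => (X ω, Y ω)) Prod.fst a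
  rw [show (fun ω => ((X ω, Y ω) : α × β).1) = X from rfl] at h
  rw [h, Finset.sum_filter, Fintype.sum_prod_type, Finset.sum_comm]
  simp

lemma pr_snd (μ : Ω → ℝ) {α β : Type*} [Fintype α] [DecidableEq α] [Fintype β] [DecidableEq β]
    (X : Ω → α) (Y : Ω → β) (b : β) :
    pr μ Y b = ∑ a, pr μ (fun ω => (X ω, Y ω)) (a, b) := by
  have h := pr_fiber μ (fun ω => (X ω, Y ω)) Prod.snd b
  rw [show (fun ω => ((X ω, Y ω) : α × β).2) = Y from rfl] at h
  rw [h, Finset.sum_filter, Fintype.sum_prod_type]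
  simp

lemma pr_swap (μ : Ω → ℝ) {α β : Type*} [Fintype α] [DecidableEq α] [Fintype β] [DecidableEq β]
    (X : Ω → α) (Y : Ω → β) (a : α) (b : β) :
    pr μ (fun ω => (Y ω, X ω)) (b, a) = pr μ (fun ω => (X ω, Y ω)) (a, b) := by
  unfold pr
  congr 1
  apply Finset.filter_congr
  intro ω _
  simp [Prod.ext_iff, and_comm]

lemma pr_comp_equiv (μ : Ω → ℝ) {α γ : Type*} [Fintype α] [DecidableEq α] [Fintype γ]
    [DecidableEq γ] (e : α ≃ γ) (X : Ω → α) (a : α) :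
    pr μ (fun ω => e (X ω)) (e a) = pr μ X a := by
  unfold pr
  congr 1
  apply Finset.filter_congr
  intro ω _
  simp [e.injective.eq_iff]

lemma gibbs {ι : Type*} [Fintype ι] (p u : ι → ℝ) (hp0 : ∀ i, 0 ≤ p i) (hu0 : ∀ i, 0 ≤ u i)
    (hp1 : ∑ i, p i = 1) (hu1 : ∑ i, u i = 1) (hpu : ∀ i, 0 < p i → 0 < u i) :
    ∑ i, -(p i * Real.logb 2 (p i)) ≤ ∑ i, -(p i * Real.logb 2 (u i)) := by
  have h2 : (0:ℝ) < Real.log 2 := Real.log_pos one_lt_two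
  have key : ∑ i, p i * (Real.log (u i) - Real.log (p i)) ≤ 0 := by
    have hle : ∀ i : ι, p i * (Real.log (u i) - Real.log (p i)) ≤ u i - p i := by
      intro i
      rcases eq_or_lt_of_le (hp0 i) with h | h
      · simp [← h, hu0 i]
      · have hu := hpu i h
        have : Real.log (u i) - Real.log (p i) = Real.log (u i / p i) := by
          rw [Real.log_div hu.ne' h.ne']
        rw [this]
        calc p i * Real.log (u i / p i) ≤ p i * (u i / p i - 1) := by
              apply mul_le_mul_of_nonneg_left (Real.log_le_sub_one_of_pos (div_pos hu h)) h.le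
          _ = u i - p i := by field_simp
    calc ∑ i, p i * (Real.log (u i) - Real.log (p i)) ≤ ∑ i, (u i - p i) :=
          Finset.sum_le_sum fun i _ => hle i
      _ = 0 := by rw [Finset.sum_sub_distrib, hp1, hu1]; ring
  rw [← sub_nonneg]
  have : (∑ i, -(p i * Real.logb 2 (u i))) - ∑ i, -(p i * Real.logb 2 (p i))
      = (-(∑ i, p i * (Real.log (u i) - Real.log (p i)))) / Real.log 2 := by
    rw [← Finset.sum_sub_distrib, ← Finset.sum_neg_distrib, Finset.sum_div]
    apply Finset.sum_congr rfl
    intro i _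
    simp only [Real.logb]
    field_simp
    ring
  rw [this]
  exact div_nonneg (neg_nonneg.2 key) h2.le

lemma ent_eq_entD (μ : Ω → ℝ) {α : Type*} [Fintype α] [DecidableEq α] (X : Ω → α) :
    ent μ X = entD (pr μ X) := rfl

lemma ent_comp_equiv (μ : Ω → ℝ) {α γ : Type*} [Fintype α] [DecidableEq α] [Fintype γ]
    [DecidableEq γ] (e : α ≃ γ) (X : Ω → α) :
    ent μ (fun ω => e (X ω)) = ent μ X := by
  unfold ent
  rw [← Equiv.sum_comp e]
  exact Finset.sum_congr rfl fun a _ => by rw [pr_comp_equiv]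

lemma ent_pair_le (μ : Ω → ℝ) (hμ0 : ∀ ω, 0 ≤ μ ω) (hμ1 : ∑ ω, μ ω = 1)
    {α β : Type*} [Fintype α] [DecidableEq α] [Fintype β] [DecidableEq β]
    (X : Ω → α) (Y : Ω → β) :
    ent μ (fun ω => (X ω, Y ω)) ≤ ent μ X + ent μ Y := by
  set p := pr μ (fun ω => (X ω, Y ω)) with hp
  set q := pr μ X with hqdef
  set r := pr μ Y with hrdef
  have hp0 : ∀ z, 0 ≤ p z := fun z => pr_nonneg μ hμ0 _ z
  have hq0 : ∀ a, 0 ≤ q a := fun a => pr_nonneg μ hμ0 _ a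
  have hr0 : ∀ b, 0 ≤ r b := fun b => pr_nonneg μ hμ0 _ b
  have hq : ∀ a, q a = ∑ b, p (a, b) := fun a => pr_fst μ X Y a
  have hr : ∀ b, r b = ∑ a, p (a, b) := fun b => pr_snd μ X Y b
  have hp1 : ∑ z, p z = 1 := by rw [hp, pr_sum, hμ1]
  have hq1 : ∑ a, q a = 1 := by rw [hqdef, pr_sum, hμ1]
  have hr1 : ∑ b, r b = 1 := by rw [hrdef, pr_sum, hμ1]
  have hqp : ∀ a b, p (a, b) ≤ q a := by
    intro a b; rw [hq a]
    exact Finset.single_le_sum (fun b' _ => hp0 (a, b')) (Finset.mem_univ b)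
  have hrp : ∀ a b, p (a, b) ≤ r b := by
    intro a b; rw [hr b]
    exact Finset.single_le_sum (fun a' _ => hp0 (a', b)) (Finset.mem_univ a)
  have hu0 : ∀ z : α × β, 0 ≤ q z.1 * r z.2 := fun z => mul_nonneg (hq0 _) (hr0 _)
  have hu1 : ∑ z : α × β, q z.1 * r z.2 = 1 := by
    rw [Fintype.sum_prod_type]
    simp_rw [← Finset.mul_sum]
    rw [hr1]
    simpa using hq1
  have hpu : ∀ z : α × β, 0 < p z → 0 < q z.1 * r z.2 := by
    rintro ⟨a, b⟩ hz
    exact mul_pos (lt_of_lt_of_le hz (hqp a b)) (lt_of_lt_of_le hz (hrp a b))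
  have hg := gibbs p (fun z => q z.1 * r z.2) hp0 hu0 hp1 hu1 hpu
  have hsplit : ∑ z : α × β, -(p z * Real.logb 2 (q z.1 * r z.2))
      = ent μ X + ent μ Y := by
    have hpt : ∀ z : α × β, -(p z * Real.logb 2 (q z.1 * r z.2))
        = -(p z * Real.logb 2 (q z.1)) + -(p z * Real.logb 2 (r z.2)) := by
      rintro ⟨a, b⟩
      rcases eq_or_lt_of_le (hp0 (a, b)) with h | h
      · simp [← h]
      · have hqa : 0 < q a := lt_of_lt_of_le h (hqp a b)
        have hrb : 0 < r b := lt_of_lt_of_le h (hrp a b)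
        rw [Real.logb_mul hqa.ne' hrb.ne']
        ring
    rw [Finset.sum_congr rfl fun z _ => hpt z, Finset.sum_add_distrib]
    have e1 : ∑ z : α × β, -(p z * Real.logb 2 (q z.1)) = ent μ X := by
      rw [Fintype.sum_prod_type]
      unfold ent
      apply Finset.sum_congr rfl
      intro a _
      rw [Finset.sum_neg_distrib]
      show -∑ x : β, p (a, x) * Real.logb 2 (q a) = _
      rw [← Finset.sum_mul, ← hq a]
    have e2 : ∑ z : α × β, -(p z * Real.logb 2 (r z.2)) = ent μ Y := by
      rw [Fintype.sum_prod_type, Finset.sum_comm]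
      unfold ent
      apply Finset.sum_congr rfl
      intro b _
      rw [Finset.sum_neg_distrib]
      show -∑ x : α, p (x, b) * Real.logb 2 (r b) = _
      rw [← Finset.sum_mul, ← hr b]
    rw [e1, e2]
  calc ent μ (fun ω => (X ω, Y ω)) ≤ ∑ z : α × β, -(p z * Real.logb 2 (q z.1 * r z.2)) := hg
    _ = ent μ X + ent μ Y := hsplit


lemma condent_kernel (μ : Ω → ℝ) (hμ0 : ∀ ω, 0 ≤ μ ω) {β γ : Type*} [Fintype β] [DecidableEq β]
    [Fintype γ] [DecidableEq γ] (Y : Ω → β) (W : Ω → γ) (K' : γ → β → ℝ)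
    (hK0 : ∀ v b, 0 ≤ K' v b) (hK1 : ∀ v, ∑ b, K' v b = 1)
    (h : ∀ b v, pr μ (fun ω => (Y ω, W ω)) (b, v) = pr μ W v * K' v b) :
    condent μ Y W = ∑ v, pr μ W v * entD (fun b => K' v b) := by
  unfold condent
  have hent : ent μ (fun ω => (Y ω, W ω))
      = ent μ W + ∑ v, pr μ W v * entD (fun b => K' v b) := by
    unfold ent
    rw [Fintype.sum_prod_type, Finset.sum_comm]
    have hv : ∀ v, (∑ b, -(pr μ (fun ω => (Y ω, W ω)) (b, v)
          * Real.logb 2 (pr μ (fun ω => (Y ω, W ω)) (b, v))))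
        = -(pr μ W v * Real.logb 2 (pr μ W v)) + pr μ W v * entD (fun b => K' v b) := by
      intro v
      have hpt : ∀ b, -(pr μ (fun ω => (Y ω, W ω)) (b, v)
            * Real.logb 2 (pr μ (fun ω => (Y ω, W ω)) (b, v)))
          = -(pr μ W v * Real.logb 2 (pr μ W v)) * K' v b
            + pr μ W v * -(K' v b * Real.logb 2 (K' v b)) := by
        intro b
        rw [h b v]
        rcases eq_or_lt_of_le (pr_nonneg μ hμ0 W v) with hv0 | hv0
        · rw [← hv0]; ring
        rcases eq_or_lt_of_le (hK0 v b) with hk0 | hk0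
        · rw [← hk0]; simp
        rw [Real.logb_mul hv0.ne' hk0.ne']
        ring
      rw [Finset.sum_congr rfl fun b _ => hpt b, Finset.sum_add_distrib]
      congr 1
      · rw [← Finset.mul_sum, hK1 v, mul_one]
      · rw [← Finset.mul_sum]
        rfl
    rw [Finset.sum_congr rfl fun v _ => hv v, Finset.sum_add_distrib]
  rw [hent]
  ring

lemma regroup (μ : Ω → ℝ) {α γ : Type*} [Fintype α] [DecidableEq α] [Fintype γ] [DecidableEq γ]
    (W : Ω → γ) (f : γ → α) (g : α → ℝ) :
    ∑ v, pr μ W v * g (f v) = ∑ a, pr μ (fun ω => f (W ω)) a * g a := by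
  have h : ∀ a, pr μ (fun ω => f (W ω)) a * g a
      = ∑ v ∈ Finset.univ.filter (fun v => f v = a), pr μ W v * g (f v) := by
    intro a
    rw [pr_fiber, Finset.sum_mul]
    apply Finset.sum_congr rfl
    intro v hv
    rw [(Finset.mem_filter.mp hv).2]
  rw [Finset.sum_congr rfl fun a _ => h a, Finset.sum_fiberwise_eq_sum_filter]
  simp

lemma kernel_of_condpr (μ : Ω → ℝ) (hμ0 : ∀ ω, 0 ≤ μ ω) {β γ : Type*} [Fintype β]
    [DecidableEq β] [Fintype γ] [DecidableEq γ] (Y : Ω → β) (W : Ω → γ) (K' : γ → β → ℝ)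
    (hc : ∀ ω, 0 < μ ω → ∀ b, condpr μ Y W b (W ω) = K' (W ω) b) (b : β) (v : γ) :
    pr μ (fun ω => (Y ω, W ω)) (b, v) = pr μ W v * K' v b := by
  by_cases hv : pr μ W v = 0
  · rw [hv, zero_mul]
    have hle : pr μ (fun ω => (Y ω, W ω)) (b, v) ≤ pr μ W v := by
      apply Finset.sum_le_sum_of_subset_of_nonneg
      · intro ω hω
        simp only [Finset.mem_filter, Finset.mem_univ, true_and, Prod.mk.injEq] at hω ⊢
        exact hω.2
      · intro ω _ _; exact hμ0 ω
    exact le_antisymm (hv ▸ hle) (pr_nonneg μ hμ0 _ _)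
  · have hv2 : ∑ ω ∈ Finset.univ.filter (fun ω => W ω = v), μ ω ≠ 0 := hv
    obtain ⟨ω, hω, hωne⟩ := Finset.exists_ne_zero_of_sum_ne_zero hv2
    have hωpos : 0 < μ ω := lt_of_le_of_ne (hμ0 ω) (Ne.symm hωne)
    have hWω : W ω = v := (Finset.mem_filter.mp hω).2
    have hcc := hc ω hωpos b
    rw [hWω] at hcc
    unfold condpr at hcc
    rw [div_eq_iff hv] at hcc
    rw [hcc, mul_comm]

lemma kernel_comp (μ : Ω → ℝ) {α β γ : Type*} [Fintype α] [DecidableEq α] [Fintype β]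
    [DecidableEq β] [Fintype γ] [DecidableEq γ] (Y : Ω → β) (W : Ω → γ) (f : γ → α)
    (K : α → β → ℝ)
    (h : ∀ b v, pr μ (fun ω => (Y ω, W ω)) (b, v) = pr μ W v * K (f v) b) (b : β) (a : α) :
    pr μ (fun ω => (Y ω, f (W ω))) (b, a) = pr μ (fun ω => f (W ω)) a * K a b := by
  have h1 := pr_fiber μ (fun ω => (Y ω, W ω)) (fun p => (p.1, f p.2)) (b, a)
  rw [show (fun ω => ((fun p : β × γ => (p.1, f p.2)) ((Y ω, W ω))))
      = (fun ω => (Y ω, f (W ω))) from rfl] at h1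
  rw [h1, pr_fiber μ W f a, Finset.sum_filter, Finset.sum_filter, Fintype.sum_prod_type,
    Finset.sum_comm, Finset.sum_mul]
  apply Finset.sum_congr rfl
  intro v _
  by_cases hfv : f v = a
  · simp [Prod.ext_iff, hfv, h b v]
  · simp [Prod.ext_iff, hfv]

lemma cmi_eq (μ : Ω → ℝ) {α β γ : Type*} [Fintype α] [DecidableEq α] [Fintype β]
    [DecidableEq β] [Fintype γ] [DecidableEq γ] (X : Ω → α) (Y : Ω → β) (Z : Ω → γ) :
    cmi μ X Y Z = condent μ Y Z - condent μ Y (fun ω => (X ω, Z ω)) := by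
  have h1 : ent μ (fun ω => (Y ω, (X ω, Z ω))) = ent μ (fun ω => ((X ω, Y ω), Z ω)) := by
    exact (ent_comp_equiv μ (⟨fun p : β × α × γ => ((p.2.1, p.1), p.2.2),
      fun q => (q.1.2, (q.1.1, q.2)), fun p => rfl, fun q => rfl⟩ : β × α × γ ≃ (α × β) × γ)
      (fun ω => (Y ω, (X ω, Z ω)))).symm
  unfold cmi condent
  linarith [h1]

lemma mi_eq (μ : Ω → ℝ) {α β : Type*} [Fintype α] [DecidableEq α] [Fintype β]
    [DecidableEq β] (X : Ω → α) (Y : Ω → β) :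
    mi μ X Y = ent μ Y - condent μ Y X := by
  have h1 : ent μ (fun ω => (Y ω, X ω)) = ent μ (fun ω => (X ω, Y ω)) := by
    exact ent_comp_equiv μ (Equiv.prodComm α β) (fun ω => (X ω, Y ω))
  unfold mi condent
  linarith [h1]

/-- for a discrete memoryless channel with kernel `K` and
single-letter capacity bound `C`, under any (possibly feedback-dependent) input
distribution, `I(Xⁿ → Yⁿ) ≤ ∑ᵢ I(Xᵢ; Yᵢ) ≤ n·C`. -/
theorem stmt11 {Ω : Type*} [Fintype Ω] (μ : Ω → ℝ)
    (hμ0 : ∀ ω, 0 ≤ μ ω) (hμ1 : ∑ ω, μ ω = 1)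
    {α β : Type*} [Fintype α] [DecidableEq α] [Fintype β] [DecidableEq β]
    {n : ℕ} (X : Ω → Fin n → α) (Y : Ω → Fin n → β)
    (K : α → β → ℝ) (hK0 : ∀ a b, 0 ≤ K a b) (hK1 : ∀ a, ∑ b, K a b = 1)
    (C : ℝ)
    (hC : ∀ q : α → ℝ, (∀ a, 0 ≤ q a) → (∑ a, q a = 1) →
      entD q + entD (fun b => ∑ a, q a * K a b)
        - entD (fun p : α × β => q p.1 * K p.1 p.2) ≤ C)
    (hmem : ∀ i : Fin n, ∀ ω, 0 < μ ω → ∀ b : β,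
      condpr μ (fun ω' => Y ω' i)
        (fun ω' => (pfx (X ω') (i.1 + 1) i.isLt, pfx (Y ω') i.1 i.isLt.le))
        b
        (pfx (X ω) (i.1 + 1) i.isLt, pfx (Y ω) i.1 i.isLt.le)
      = K (X ω i) b) :
    dirinfo μ X Y ≤ (∑ i : Fin n, mi μ (fun ω => X ω i) (fun ω => Y ω i)) ∧
    (∑ i : Fin n, mi μ (fun ω => X ω i) (fun ω => Y ω i)) ≤ n * C := by
  have key : ∀ i : Fin n,
      cmi μ (fun ω => pfx (X ω) (i.1 + 1) i.isLt) (fun ω => Y ω i)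
          (fun ω => pfx (Y ω) i.1 i.isLt.le)
        ≤ mi μ (fun ω => X ω i) (fun ω => Y ω i)
      ∧ mi μ (fun ω => X ω i) (fun ω => Y ω i) ≤ C := by
    intro i
    set Yi : Ω → β := fun ω => Y ω i with hYi
    set W : Ω → (Fin (i.1 + 1) → α) × (Fin i.1 → β) :=
      fun ω => (pfx (X ω) (i.1 + 1) i.isLt, pfx (Y ω) i.1 i.isLt.le) with hWdef
    set f : (Fin (i.1 + 1) → α) × (Fin i.1 → β) → α :=
      fun v => v.1 ⟨i.1, Nat.lt_succ_self _⟩ with hfdef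
    have hfW : (fun ω => f (W ω)) = (fun ω => X ω i) := by
      funext ω
      show X ω (Fin.castLE i.isLt ⟨i.1, Nat.lt_succ_self _⟩) = X ω i
      exact congrArg (X ω) (Fin.ext rfl)
    have hker : ∀ b v, pr μ (fun ω => (Yi ω, W ω)) (b, v) = pr μ W v * K (f v) b := by
      intro b v
      apply kernel_of_condpr μ hμ0 Yi W (fun v b => K (f v) b) _ b v
      intro ω hω b'
      have hm := hmem i ω hω b'
      show condpr μ Yi W b' (W ω) = K (f (W ω)) b'
      rw [show f (W ω) = X ω i from congrFun hfW ω]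
      exact hm
    have hS1 : condent μ Yi W = ∑ v, pr μ W v * entD (fun b => K (f v) b) :=
      condent_kernel μ hμ0 Yi W (fun v b => K (f v) b) (fun v b => hK0 _ b)
        (fun v => hK1 _) hker
    have hS1' : condent μ Yi W = ∑ a, pr μ (fun ω => X ω i) a * entD (fun b => K a b) := by
      rw [hS1, regroup μ W f (fun a => entD (fun b => K a b)), hfW]
    have hcomp : ∀ b a, pr μ (fun ω => (Yi ω, X ω i)) (b, a)
        = pr μ (fun ω => X ω i) a * K a b := by
      intro b a
      have hk := kernel_comp μ Yi W f K hker b a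
      rwa [show (fun ω => (Yi ω, f (W ω))) = (fun ω => (Yi ω, X ω i)) from by
        funext ω; rw [congrFun hfW ω], hfW] at hk
    have hS2 : condent μ Yi (fun ω => X ω i)
        = ∑ a, pr μ (fun ω => X ω i) a * entD (fun b => K a b) :=
      condent_kernel μ hμ0 Yi (fun ω => X ω i) (fun a b => K a b)
        (fun a b => hK0 a b) (fun a => hK1 a) hcomp
    have hjoint : pr μ (fun ω => (X ω i, Yi ω)) = fun p : α × β =>
        pr μ (fun ω => X ω i) p.1 * K p.1 p.2 := by
      funext p
      rcases p with ⟨a, b⟩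
      rw [← pr_swap μ (fun ω => X ω i) Yi a b]
      exact hcomp b a
    constructor
    · -- cmi ≤ mi
      have e1 : cmi μ (fun ω => pfx (X ω) (i.1 + 1) i.isLt) Yi
            (fun ω => pfx (Y ω) i.1 i.isLt.le)
          = condent μ Yi (fun ω => pfx (Y ω) i.1 i.isLt.le) - condent μ Yi W := by
        rw [cmi_eq]
      have e2 : mi μ (fun ω => X ω i) Yi = ent μ Yi - condent μ Yi (fun ω => X ω i) :=
        mi_eq μ (fun ω => X ω i) Yi
      have hle : condent μ Yi (fun ω => pfx (Y ω) i.1 i.isLt.le) ≤ ent μ Yi := by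
        unfold condent
        have hpl := ent_pair_le μ hμ0 hμ1 Yi (fun ω => pfx (Y ω) i.1 i.isLt.le)
        linarith
      rw [e1, e2, hS2, ← hS1']
      linarith
    · -- mi ≤ C
      have hq0 : ∀ a, 0 ≤ pr μ (fun ω => X ω i) a := fun a => pr_nonneg μ hμ0 _ a
      have hq1 : ∑ a, pr μ (fun ω => X ω i) a = 1 := by rw [pr_sum, hμ1]
      have hCq := hC (pr μ (fun ω => X ω i)) hq0 hq1
      have hmarg : pr μ Yi = fun b => ∑ a, pr μ (fun ω => X ω i) a * K a b := by
        funext b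
        rw [pr_snd μ (fun ω => X ω i) Yi b]
        exact Finset.sum_congr rfl fun a _ => by rw [congrFun hjoint (a, b)]
      show mi μ (fun ω => X ω i) Yi ≤ C
      unfold mi
      rw [ent_eq_entD, ent_eq_entD, ent_eq_entD, hjoint, hmarg]
      exact hCq
  constructor
  · unfold dirinfo
    exact Finset.sum_le_sum fun i _ => (key i).1
  · calc (∑ i : Fin n, mi μ (fun ω => X ω i) (fun ω => Y ω i)) ≤ ∑ _i : Fin n, C :=
        Finset.sum_le_sum fun i _ => (key i).2
      _ = n * C := by simp [Finset.sum_const, Finset.card_univ, nsmul_eq_mul]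

end NFB
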